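/- Detailed balance: Let N ≥ 2, d ≥ 1, and let the rates satisfy C_+ > 0, C_- > 0, C_E ≥ 0, C_A > 0, C_C > 0. Fix ρ ∈ (-1,1). Then for every ordered pair b = (x,y) of nearest-neighbour sites of the discrete torus T^d_N = (Z/NZ)^d and every b-active configuration η ∈ {-1,0,1}^{T^d_N}, one has c_b(η)·ν_ρ({η}) = c_{b'}(η^{(x,y)})·ν_ρ({η^{(x,y)}}), where b' = (y,x) is the reversed bond. -/

import Mathlib

open Finset

/-- Spin value of a configuration at a site: the `Fin 3` values `0, 1, 2`
code the spins `-1, 0, 1` respectively. -/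
def spin {V : Type*} (η : V → Fin 3) (x : V) : ℤ := (η x : ℤ) - 1

/-- `η` is `(x,y)`-active: the spin pattern `(η(x), η(y))` belongs to
`{(1,0), (0,-1), (-1,1), (1,-1), (0,0)}` (in `Fin 3` coding: `(2,1), (1,0), (0,2), (2,0), (1,1)`). -/
def IsActive {V : Type*} (x y : V) (η : V → Fin 3) : Prop :=
  (η x = 2 ∧ η y = 1) ∨ (η x = 1 ∧ η y = 0) ∨ (η x = 0 ∧ η y = 2) ∨
    (η x = 2 ∧ η y = 0) ∨ (η x = 1 ∧ η y = 1)

/-- The configuration `η^{(x,y)}`: swap the values at `x` and `y` in the three exchange cases,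
annihilate a `(+,-)` pair, or create a `(-,+)` pair from two empty sites. -/
def cfgFlip {V : Type*} [DecidableEq V] (x y : V) (η : V → Fin 3) : V → Fin 3 := fun z =>
  if z = x then (if η x = 2 ∧ η y = 0 then 1 else if η x = 1 ∧ η y = 1 then 0 else η y)
  else if z = y then (if η x = 2 ∧ η y = 0 then 1 else if η x = 1 ∧ η y = 1 then 2 else η x)
  else η z

/-- The jump rate `c_{(x,y)}(η)`. -/
def rate {V : Type*} (Cp Cm CE CA CC : ℝ) (x y : V) (η : V → Fin 3) : ℝ :=
  if η x = 2 ∧ η y = 1 then Cp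
  else if η x = 1 ∧ η y = 0 then Cm
  else if η x = 0 ∧ η y = 2 then CE
  else if η x = 2 ∧ η y = 0 then CA
  else if η x = 1 ∧ η y = 1 then CC
  else 0

/-- `Φ(ρ)`, the probability of an empty site, with `β = C_C / C_A`. -/
noncomputable def Phi (β ρ : ℝ) : ℝ :=
  if β = 1 / 4 then (1 - ρ ^ 2) / 2
  else (1 - Real.sqrt (4 * β + ρ ^ 2 - 4 * β * ρ ^ 2)) / (1 - 4 * β)

/-- The single-site marginal weight of `ν_ρ`: spin `-1` (value `0`) gets `(1-Φ(ρ)-ρ)/2`,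
spin `0` (value `1`) gets `Φ(ρ)`, spin `1` (value `2`) gets `(1-Φ(ρ)+ρ)/2`. -/
noncomputable def wgt (β ρ : ℝ) : Fin 3 → ℝ := fun v =>
  if v = 0 then (1 - Phi β ρ - ρ) / 2 else if v = 1 then Phi β ρ else (1 - Phi β ρ + ρ) / 2

/-- The product measure `ν_ρ` (as a weight function on configurations on a finite site set). -/
noncomputable def nuProd {V : Type*} [Fintype V] (β ρ : ℝ) (η : V → Fin 3) : ℝ :=
  ∏ x, wgt β ρ (η x)

/-- `x` and `y` are nearest neighbours on the discrete torus `(ℤ/Nℤ)^d`. -/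
def torusNbr {d N : ℕ} (x y : Fin d → ZMod N) : Prop :=
  ∃ i : Fin d, y = x + Pi.single i 1 ∨ y = x - Pi.single i 1

/-!
Exchange moves permute the spins at the two sites, so they leave the product weight unchanged.
Annihilation `(+,-) → (0,0)` and creation `(0,0) → (-,+)` balance iff
`C_A ν(+) ν(-) = C_C ν(0)²`, i.e. `(1 - Φ)² - ρ² = 4 β Φ²`, and `Φ(ρ)` is a root of this
quadratic.
-/

lemma Phi_quadratic {β ρ : ℝ} (hβ : 0 ≤ β) (hρ : ρ ^ 2 ≤ 1) :
    (1 - Phi β ρ) ^ 2 - ρ ^ 2 = 4 * β * Phi β ρ ^ 2 := by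
  unfold Phi
  split_ifs with hβ4
  · subst hβ4; ring
  · have hdisc : Real.sqrt (4 * β + ρ ^ 2 - 4 * β * ρ ^ 2) ^ 2 = 4 * β + ρ ^ 2 - 4 * β * ρ ^ 2 :=
      Real.sq_sqrt (by nlinarith)
    have h4 : (1 : ℝ) - 4 * β ≠ 0 := fun h0 => hβ4 (by linarith)
    field_simp
    linear_combination (1 - 4 * β) * hdisc

@[simp] lemma wgt_zero (β ρ : ℝ) : wgt β ρ 0 = (1 - Phi β ρ - ρ) / 2 := rfl

@[simp] lemma wgt_one (β ρ : ℝ) : wgt β ρ 1 = Phi β ρ := rfl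

@[simp] lemma wgt_two (β ρ : ℝ) : wgt β ρ 2 = (1 - Phi β ρ + ρ) / 2 := rfl

lemma wgt_zero_mul_wgt_two {β ρ : ℝ} (hβ : 0 ≤ β) (hρ : ρ ^ 2 ≤ 1) :
    wgt β ρ 0 * wgt β ρ 2 = β * wgt β ρ 1 ^ 2 := by
  simp only [wgt_zero, wgt_one, wgt_two]
  linear_combination Phi_quadratic hβ hρ / 4

section cfgFlip

variable {V : Type*} [DecidableEq V] {x y : V} (η : V → Fin 3)

lemma cfgFlip_apply_of_ne {z : V} (hzx : z ≠ x) (hzy : z ≠ y) : cfgFlip x y η z = η z := by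
  simp [cfgFlip, hzx, hzy]

lemma cfgFlip_apply_left :
    cfgFlip x y η x =
      if η x = 2 ∧ η y = 0 then 1 else if η x = 1 ∧ η y = 1 then 0 else η y := by
  simp [cfgFlip]

lemma cfgFlip_apply_right (hxy : x ≠ y) :
    cfgFlip x y η y =
      if η x = 2 ∧ η y = 0 then 1 else if η x = 1 ∧ η y = 1 then 2 else η x := by
  simp [cfgFlip, hxy.symm]

end cfgFlip

lemma prod_eq_mul_mul_prod_compl_pair {V M : Type*} [Fintype V] [DecidableEq V] [CommMonoid M]
    {x y : V} (hxy : x ≠ y) (f : V → M) :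
    ∏ z, f z = f x * f y * ∏ z ∈ {x, y}ᶜ, f z := by
  rw [← prod_pair hxy, prod_mul_prod_compl]

section DetailedBalance

variable {V : Type*} [DecidableEq V] (Cp Cm CE : ℝ) {CA CC β ρ : ℝ} {x y : V} {η : V → Fin 3}

lemma rate_mul_wgt_cfgFlip (hbal : CA * (wgt β ρ 0 * wgt β ρ 2) = CC * wgt β ρ 1 ^ 2)
    (hxy : x ≠ y) (hact : IsActive x y η) :
    rate Cp Cm CE CA CC x y η * wgt β ρ (η x) * wgt β ρ (η y) =
      rate Cp Cm CE CA CC y x (cfgFlip x y η) * wgt β ρ (cfgFlip x y η x) *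
        wgt β ρ (cfgFlip x y η y) := by
  rw [cfgFlip_apply_left, cfgFlip_apply_right η hxy]
  simp only [wgt_zero, wgt_one, wgt_two] at hbal
  rcases hact with ⟨hx, hy⟩ | ⟨hx, hy⟩ | ⟨hx, hy⟩ | ⟨hx, hy⟩ | ⟨hx, hy⟩ <;>
    simp only [rate, cfgFlip_apply_left, cfgFlip_apply_right η hxy, hx, hy] <;>
    simp only [Fin.reduceEq, and_self, and_true, and_false, if_true, if_false,
      wgt_zero, wgt_one, wgt_two]
  case inl | inr.inl | inr.inr.inl => ring
  case inr.inr.inr.inl => linear_combination hbal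
  case inr.inr.inr.inr => linear_combination -hbal

lemma rate_mul_nuProd_cfgFlip [Fintype V] (hCA : CA ≠ 0) (hβ : 0 ≤ CC / CA) (hρ : ρ ^ 2 ≤ 1)
    (hxy : x ≠ y) (hact : IsActive x y η) :
    rate Cp Cm CE CA CC x y η * nuProd (CC / CA) ρ η =
      rate Cp Cm CE CA CC y x (cfgFlip x y η) * nuProd (CC / CA) ρ (cfgFlip x y η) := by
  have hbal : CA * (wgt (CC / CA) ρ 0 * wgt (CC / CA) ρ 2) = CC * wgt (CC / CA) ρ 1 ^ 2 := by
    rw [wgt_zero_mul_wgt_two hβ hρ]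
    field_simp
  have hrest : ∏ z ∈ {x, y}ᶜ, wgt (CC / CA) ρ (cfgFlip x y η z) =
      ∏ z ∈ {x, y}ᶜ, wgt (CC / CA) ρ (η z) := by
    refine prod_congr rfl fun z hz => ?_
    simp only [mem_compl, mem_insert, mem_singleton, not_or] at hz
    rw [cfgFlip_apply_of_ne η hz.1 hz.2]
  rw [nuProd, nuProd, prod_eq_mul_mul_prod_compl_pair hxy, prod_eq_mul_mul_prod_compl_pair hxy,
    hrest]
  simp only [← mul_assoc]
  rw [rate_mul_wgt_cfgFlip Cp Cm CE hbal hxy hact]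

end DetailedBalance

lemma torusNbr.ne {d N : ℕ} {x y : Fin d → ZMod N} (hxy : torusNbr x y) (hN : N ≠ 1) :
    x ≠ y := by
  have : Nontrivial (ZMod N) := ZMod.nontrivial_iff.mpr hN
  rintro rfl
  obtain ⟨i, hi | hi⟩ := hxy
  all_goals simpa [eq_comm (a := x i)] using congrFun hi i

theorem two_species_detailed_balance_general
    (N d : ℕ) [NeZero N] (hN : 2 ≤ N)
    (Cp Cm CE CA CC : ℝ)
    (hCA : 0 < CA) (hCC : 0 < CC)
    (ρ : ℝ) (hρ : ρ ∈ Set.Ioo (-1 : ℝ) 1)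
    (x y : Fin d → ZMod N) (hxy : torusNbr x y)
    (η : (Fin d → ZMod N) → Fin 3) (hact : IsActive x y η) :
    rate Cp Cm CE CA CC x y η * nuProd (CC / CA) ρ η =
      rate Cp Cm CE CA CC y x (cfgFlip x y η) * nuProd (CC / CA) ρ (cfgFlip x y η) := by
  have hρ2 : ρ ^ 2 ≤ 1 := by nlinarith [hρ.1, hρ.2]
  exact rate_mul_nuProd_cfgFlip Cp Cm CE hCA.ne' (div_nonneg hCC.le hCA.le) hρ2
    (hxy.ne (by omega)) hact

/-- detailed balance `c_b(η) ν_ρ(η) = c_{b'}(η^{(x,y)}) ν_ρ(η^{(x,y)})`. -/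
theorem two_species_detailed_balance
    (N d : ℕ) [NeZero N] (hN : 2 ≤ N) (hd : 1 ≤ d)
    (Cp Cm CE CA CC : ℝ)
    (hCp : 0 < Cp) (hCm : 0 < Cm) (hCE : 0 ≤ CE) (hCA : 0 < CA) (hCC : 0 < CC)
    (ρ : ℝ) (hρ : ρ ∈ Set.Ioo (-1 : ℝ) 1)
    (x y : Fin d → ZMod N) (hxy : torusNbr x y)
    (η : (Fin d → ZMod N) → Fin 3) (hact : IsActive x y η) :
    rate Cp Cm CE CA CC x y η * nuProd (CC / CA) ρ η =
      rate Cp Cm CE CA CC y x (cfgFlip x y η) * nuProd (CC / CA) ρ (cfgFlip x y η) :=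
  two_species_detailed_balance_general N d hN Cp Cm CE CA CC hCA hCC ρ hρ x y hxy η hact
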